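/- arXiv:1705.02964 — 4 statements merged into one kernel-verified Lean document; each statement's English description precedes it below -/
import Mathlib

section
/- Let N ∈ ℕ, K ≥ 0, L > 0, and 0 < γ₀ ≤ γ_N with γ₀ < 1. If 0 < ε < γ₀ / (L((1+γ_N)(N+1) + γ₀ K)), and in particular ε < 1/(L(N+1+K)), then c := 1 - γ₀ + L(1 - γ₀ + γ_N) · ε(N+1)/(1 - εL(N+1+K)) satisfies 0 ≤ c < 1. -/
/-! Clearing the positive denominator `1 - εL(N+1+K)`, the inequality `c < 1` becomes
`εL((1-γ₀+γN)(N+1) + γ₀(N+1+K)) < γ₀`, and the bracket is `(1+γN)(N+1) + γ₀K`, so this is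
exactly the hypothesis on `ε`. Nonnegativity holds termwise. -/

section

variable {𝕜 : Type*} [Field 𝕜] [LinearOrder 𝕜] [IsStrictOrderedRing 𝕜]

lemma mul_lt_of_lt_div_of_pos {x a b : 𝕜} (hx : 0 < x) (ha : 0 < a) (h : x < a / b) :
    x * b < a :=
  (lt_div_iff₀ ((div_pos_iff_of_pos_left ha).1 (hx.trans h))).1 h

lemma one_sub_add_mul_div_lt_one {g a e D : 𝕜} (hD : 0 < D) (h : a * e < g * D) :
    1 - g + a * (e / D) < 1 := by
  have : a * (e / D) < g := by rwa [← mul_div_assoc, div_lt_iff₀ hD]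
  linarith

end

theorem stmt3_general (N : ℕ) (K L γ₀ γN ε : ℝ) (hL : 0 < L)
    (hγ0 : 0 < γ₀) (hγN : γ₀ ≤ γN) (hγ1 : γ₀ < 1)
    (hε0 : 0 < ε) (hε : ε < γ₀ / (L * ((1 + γN) * (N + 1) + γ₀ * K)))
    (hε' : ε < 1 / (L * (N + 1 + K))) :
    0 ≤ 1 - γ₀ + L * (1 - γ₀ + γN) * (ε * (N + 1) / (1 - ε * L * (N + 1 + K))) ∧
      1 - γ₀ + L * (1 - γ₀ + γN) * (ε * (N + 1) / (1 - ε * L * (N + 1 + K))) < 1 := by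
  have hD : 0 < 1 - ε * L * (N + 1 + K) := by
    have := mul_lt_of_lt_div_of_pos hε0 one_pos hε'
    rw [← mul_assoc] at this
    linarith
  have hγ : 0 ≤ 1 - γ₀ + γN := by linarith
  constructor
  · have : 0 ≤ ε * (N + 1) / (1 - ε * L * (N + 1 + K)) := by positivity
    have := mul_nonneg (mul_nonneg hL.le hγ) this
    linarith
  · apply one_sub_add_mul_div_lt_one hD
    have := mul_lt_of_lt_div_of_pos hε0 hγ0 hε
    linear_combination this

theorem stmt3 (N : ℕ) (K L γ₀ γN ε : ℝ) (hK : 0 ≤ K) (hL : 0 < L)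
    (hγ0 : 0 < γ₀) (hγN : γ₀ ≤ γN) (hγ1 : γ₀ < 1)
    (hε0 : 0 < ε) (hε : ε < γ₀ / (L * ((1 + γN) * (N + 1) + γ₀ * K)))
    (hε' : ε < 1 / (L * (N + 1 + K))) :
    0 ≤ 1 - γ₀ + L * (1 - γ₀ + γN) * (ε * (N + 1) / (1 - ε * L * (N + 1 + K))) ∧
      1 - γ₀ + L * (1 - γ₀ + γN) * (ε * (N + 1) / (1 - ε * L * (N + 1 + K))) < 1 :=
  stmt3_general N K L γ₀ γN ε hL hγ0 hγN hγ1 hε0 hε hε'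
end

section
/- Let B denote the space of bounded continuous functions b : ℝ → ℝ with the sup norm, and let B_L = {g : ℝ → ℝ^{N+1} continuous : ‖g‖_∞ ≤ L and Lip(g) ≤ L}. Fix g ∈ B_L, continuous functions q_{2i} : ℝ → ℝ with ‖q_{2i}‖_∞ ≤ 1 and Lip(q_{2i}) = K_i for i = 0,…,N, constants T_c ∈ ℝ and ε > 0 with ε < 1/(L(N+1+K)) where K = Σᵢ Kᵢ. Then the map Φ : B → B defined by (Φb)(w) = ε(T_c − Σ_{i=0}^N (g(w+b(w)))_i · q_{2i}(w+b(w))) is a contraction with Lipschitz constant at most εL(N+1+K) < 1, and hence has a unique fixed point b* ∈ B. -/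
/-!
Write `Φ b = ε (Tc - F ∘ (id + b))` with `F = ∑ i, gᵢ qᵢ`. Each product `gᵢ qᵢ` of bounded
Lipschitz functions is `L (Kᵢ + 1)`-Lipschitz, so `F` is `L (N + 1 + K)`-Lipschitz, and
`|(w + b₁ w) - (w + b₂ w)| ≤ ‖b₁ - b₂‖∞`; hence `Φ` is `ε L (N + 1 + K)`-Lipschitz, and
Banach's fixed point theorem applies on the complete space of bounded continuous functions.
-/

open scoped NNReal BoundedContinuousFunction

lemma PiLp.lipschitzWith_apply {ι : Type*} [Fintype ι] (p : ENNReal) [Fact (1 ≤ p)]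
    {β : ι → Type*} [∀ i, PseudoMetricSpace (β i)] (i : ι) :
    LipschitzWith 1 fun x : PiLp p β => x i :=
  LipschitzWith.of_dist_le_mul fun x y => by simpa using PiLp.dist_apply_le x y i

lemma LipschitzWith.finset_sum {α ι E : Type*} [PseudoEMetricSpace α] [SeminormedAddCommGroup E]
    (s : Finset ι) {f : ι → α → E} {K : ι → ℝ≥0} (hf : ∀ i ∈ s, LipschitzWith (K i) (f i)) :
    LipschitzWith (∑ i ∈ s, K i) fun x => ∑ i ∈ s, f i x := by
  classical
  induction s using Finset.induction_on with
  | empty => simpa using LipschitzWith.const (0 : E)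
  | insert j s hj ih =>
    simp only [Finset.sum_insert hj]
    exact (hf j (Finset.mem_insert_self j s)).add
      (ih fun i hi => hf i (Finset.mem_insert_of_mem hi))

lemma LipschitzWith.mul_of_norm_le {α R : Type*} [PseudoMetricSpace α]
    [NonUnitalSeminormedRing R] {f h : α → R} {Kf Kh A B : ℝ≥0}
    (hf : LipschitzWith Kf f) (hh : LipschitzWith Kh h)
    (hfA : ∀ x, ‖f x‖ ≤ A) (hhB : ∀ x, ‖h x‖ ≤ B) :
    LipschitzWith (A * Kh + Kf * B) fun x => f x * h x := by
  refine LipschitzWith.of_dist_le_mul fun x y => ?_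
  simp only [dist_eq_norm] at *
  calc ‖f x * h x - f y * h y‖ = ‖f x * (h x - h y) + (f x - f y) * h y‖ := by
        rw [mul_sub, sub_mul, sub_add_sub_cancel]
    _ ≤ ‖f x‖ * ‖h x - h y‖ + ‖f x - f y‖ * ‖h y‖ :=
        (norm_add_le _ _).trans (add_le_add (norm_mul_le _ _) (norm_mul_le _ _))
    _ ≤ A * (Kh * dist x y) + Kf * dist x y * B := by
        gcongr
        exacts [hfA x, dist_eq_norm (h x) (h y) ▸ hh.dist_le_mul x y,
          dist_eq_norm (f x) (f y) ▸ hf.dist_le_mul x y, hhB y]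
    _ = ↑(A * Kh + Kf * B) * dist x y := by push_cast; ring

lemma BoundedContinuousFunction.dist_le_of_apply_eq_mul_sub_comp_add
    {Φ : (ℝ →ᵇ ℝ) → (ℝ →ᵇ ℝ)} {F : ℝ → ℝ} {K : ℝ≥0} {c T : ℝ} (hc : 0 ≤ c)
    (hF : LipschitzWith K F) (hΦ : ∀ b w, Φ b w = c * (T - F (w + b w))) (b₁ b₂ : ℝ →ᵇ ℝ) :
    dist (Φ b₁) (Φ b₂) ≤ c * K * dist b₁ b₂ := by
  refine (BoundedContinuousFunction.dist_le (by positivity)).mpr fun w => ?_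
  have hshift : dist (w + b₁ w) (w + b₂ w) ≤ dist b₁ b₂ := by
    rw [dist_add_left]; exact BoundedContinuousFunction.dist_coe_le_dist w
  calc dist (Φ b₁ w) (Φ b₂ w) = c * dist (F (w + b₁ w)) (F (w + b₂ w)) := by
        rw [hΦ, hΦ, Real.dist_eq, Real.dist_eq, ← mul_sub, abs_mul, abs_of_nonneg hc,
          sub_sub_sub_cancel_left, abs_sub_comm]
    _ ≤ c * (K * dist b₁ b₂) := by
        gcongr; exact (hF.dist_le_mul _ _).trans (by gcongr)
    _ = c * K * dist b₁ b₂ := by ring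

lemma existsUnique_eq_of_dist_le_mul {α : Type*} [MetricSpace α] [CompleteSpace α] [Nonempty α]
    {f : α → α} {C : ℝ} (hC : C < 1) (hf : ∀ x y, dist (f x) (f y) ≤ C * dist x y) :
    ∃! x, f x = x := by
  have hcontr : ContractingWith C.toNNReal f :=
    ⟨Real.toNNReal_lt_one.mpr hC, LipschitzWith.of_dist_le' hf⟩
  exact ⟨hcontr.fixedPoint f, hcontr.fixedPoint_isFixedPt,
    fun x hx => hcontr.fixedPoint_unique hx⟩

theorem stmt4_general (N : ℕ) (L Tc ε : ℝ) (hL : 0 < L)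
    (g : ℝ → EuclideanSpace ℝ (Fin (N + 1)))
    (hgb : ∀ x, ‖g x‖ ≤ L)
    (hglip : LipschitzWith (Real.toNNReal L) g)
    (q : Fin (N + 1) → ℝ → ℝ) (Ki : Fin (N + 1) → NNReal)
    (hqb : ∀ i x, |q i x| ≤ 1)
    (hqlip : ∀ i, LipschitzWith (Ki i) (q i))
    (K : ℝ) (hKdef : K = ∑ i, (Ki i : ℝ))
    (hε0 : 0 < ε) (hε : ε < 1 / (L * (N + 1 + K)))
    (Φ : BoundedContinuousFunction ℝ ℝ → BoundedContinuousFunction ℝ ℝ)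
    (hΦ : ∀ b w, Φ b w = ε * (Tc - ∑ i, g (w + b w) i * q i (w + b w))) :
    (∀ b₁ b₂, dist (Φ b₁) (Φ b₂) ≤ ε * L * (N + 1 + K) * dist b₁ b₂) ∧
      ε * L * (N + 1 + K) < 1 ∧ ∃! b, Φ b = b := by
  have hterm (i : Fin (N + 1)) : LipschitzWith (L.toNNReal * Ki i + L.toNNReal * 1)
      fun x => g x i * q i x := by
    have hgi : LipschitzWith L.toNNReal fun x => g x i := by
      have := (PiLp.lipschitzWith_apply 2 i).comp hglip
      rwa [one_mul] at this
    refine hgi.mul_of_norm_le (hqlip i) (fun x => ?_) (fun x => by simpa using hqb i x)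
    rw [Real.coe_toNNReal _ hL.le]
    exact (PiLp.norm_apply_le _ i).trans (hgb x)
  have hconst : ((∑ i, (L.toNNReal * Ki i + L.toNNReal * 1) : ℝ≥0) : ℝ) = L * (N + 1 + K) := by
    push_cast
    rw [Real.coe_toNNReal _ hL.le, Finset.sum_add_distrib, ← Finset.mul_sum, ← hKdef]
    simp only [mul_one, Finset.sum_const, Finset.card_univ, Fintype.card_fin, nsmul_eq_mul]
    push_cast; ring
  have hdist (b₁ b₂) : dist (Φ b₁) (Φ b₂) ≤ ε * L * (N + 1 + K) * dist b₁ b₂ := by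
    have := BoundedContinuousFunction.dist_le_of_apply_eq_mul_sub_comp_add hε0.le
      (LipschitzWith.finset_sum Finset.univ fun i _ => hterm i) hΦ b₁ b₂
    rwa [hconst, ← mul_assoc] at this
  have hK0 : 0 ≤ K := hKdef ▸ Finset.sum_nonneg fun i _ => (Ki i).coe_nonneg
  have hlt : ε * L * (N + 1 + K) < 1 := by
    rwa [lt_div_iff₀ (by positivity), ← mul_assoc] at hε
  exact ⟨hdist, hlt, existsUnique_eq_of_dist_le_mul hlt hdist⟩

theorem stmt4 (N : ℕ) (L Tc ε : ℝ) (hL : 0 < L)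
    (g : ℝ → EuclideanSpace ℝ (Fin (N + 1)))
    (hgc : Continuous g) (hgb : ∀ x, ‖g x‖ ≤ L)
    (hglip : LipschitzWith (Real.toNNReal L) g)
    (q : Fin (N + 1) → ℝ → ℝ) (Ki : Fin (N + 1) → NNReal)
    (hqc : ∀ i, Continuous (q i)) (hqb : ∀ i x, |q i x| ≤ 1)
    (hqlip : ∀ i, LipschitzWith (Ki i) (q i))
    (K : ℝ) (hKdef : K = ∑ i, (Ki i : ℝ))
    (hε0 : 0 < ε) (hε : ε < 1 / (L * (N + 1 + K)))
    (Φ : BoundedContinuousFunction ℝ ℝ → BoundedContinuousFunction ℝ ℝ)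
    (hΦ : ∀ b w, Φ b w = ε * (Tc - ∑ i, g (w + b w) i * q i (w + b w))) :
    (∀ b₁ b₂, dist (Φ b₁) (Φ b₂) ≤ ε * L * (N + 1 + K) * dist b₁ b₂) ∧
      ε * L * (N + 1 + K) < 1 ∧ ∃! b, Φ b = b :=
  stmt4_general N L Tc ε hL g hgb hglip q Ki hqb hqlip K hKdef hε0 hε Φ hΦ
end

section
/- Under the hypotheses of the preceding contraction result (g ∈ B_L, ‖q_{2i}‖_∞ ≤ 1, Lip(q_{2i}) = K_i, 0 < ε < 1/(L(N+1+K))), for every η ∈ ℝ there exists β ∈ ℝ such that η = β + ε(Σ_{i=0}^N (g(β))_i q_{2i}(β) − T_c). -/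
/-!
The map `β ↦ β + ε (∑ i, g β i * q i β - Tc)` is the identity plus a continuous perturbation
bounded by `|ε| ((N + 1) L + |Tc|)`, because `|g β i * q i β| ≤ ‖g β‖ ≤ L`. Such a map tends to
`±∞` with `β`, so it is onto by the intermediate value theorem.
-/

open Filter Function

theorem Real.surjective_id_add_of_continuous_of_abs_le {p : ℝ → ℝ} {M : ℝ}
    (hp : Continuous p) (hpM : ∀ x, |p x| ≤ M) : Surjective fun x => x + p x :=
  (continuous_id.add hp).surjective
    (tendsto_atTop_add_right_of_le _ (-M) tendsto_id fun x => neg_le_of_abs_le (hpM x))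
    (tendsto_atBot_add_right_of_ge _ M tendsto_id fun x => le_of_abs_le (hpM x))

theorem EuclideanSpace.abs_sum_mul_le {ι : Type*} [Fintype ι] (v : EuclideanSpace ℝ ι)
    {w : ι → ℝ} (hw : ∀ i, |w i| ≤ 1) : |∑ i, v i * w i| ≤ Fintype.card ι * ‖v‖ :=
  calc |∑ i, v i * w i| ≤ ∑ i, |v i * w i| := Finset.abs_sum_le_sum_abs _ _
    _ ≤ ∑ _i : ι, ‖v‖ := Finset.sum_le_sum fun i _ => by
        rw [abs_mul]
        calc |v i| * |w i| ≤ |v i| := mul_le_of_le_one_right (abs_nonneg _) (hw i)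
          _ ≤ ‖v‖ := PiLp.norm_apply_le v i
    _ = Fintype.card ι * ‖v‖ := by simp

theorem stmt5_general (N : ℕ) (L Tc ε : ℝ)
    (g : ℝ → EuclideanSpace ℝ (Fin (N + 1)))
    (hgc : Continuous g) (hgb : ∀ x, ‖g x‖ ≤ L)
    (q : Fin (N + 1) → ℝ → ℝ)
    (hqc : ∀ i, Continuous (q i)) (hqb : ∀ i x, |q i x| ≤ 1) :
    ∀ η : ℝ, ∃ β : ℝ, η = β + ε * (∑ i, g β i * q i β - Tc) := by
  intro η
  have hcont : Continuous fun β => ε * (∑ i, g β i * q i β - Tc) := by fun_prop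
  have hbound : ∀ β, |ε * (∑ i, g β i * q i β - Tc)| ≤ |ε| * ((N + 1) * L + |Tc|) := by
    intro β
    have hsum := EuclideanSpace.abs_sum_mul_le (g β) (hqb · β)
    rw [Fintype.card_fin, Nat.cast_succ] at hsum
    rw [abs_mul]
    gcongr
    calc |∑ i, g β i * q i β - Tc| ≤ |∑ i, g β i * q i β| + |Tc| := abs_sub _ _
      _ ≤ (N + 1) * L + |Tc| := by gcongr; exact hsum.trans (by gcongr; exact hgb β)
  obtain ⟨β, hβ⟩ := Real.surjective_id_add_of_continuous_of_abs_le hcont hbound η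
  exact ⟨β, hβ.symm⟩

theorem stmt5 (N : ℕ) (L Tc ε : ℝ) (hL : 0 < L)
    (g : ℝ → EuclideanSpace ℝ (Fin (N + 1)))
    (hgc : Continuous g) (hgb : ∀ x, ‖g x‖ ≤ L)
    (hglip : LipschitzWith (Real.toNNReal L) g)
    (q : Fin (N + 1) → ℝ → ℝ) (Ki : Fin (N + 1) → NNReal)
    (hqc : ∀ i, Continuous (q i)) (hqb : ∀ i x, |q i x| ≤ 1)
    (hqlip : ∀ i, LipschitzWith (Ki i) (q i))
    (K : ℝ) (hKdef : K = ∑ i, (Ki i : ℝ))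
    (hε0 : 0 < ε) (hε : ε < 1 / (L * (N + 1 + K))) :
    ∀ η : ℝ, ∃ β : ℝ, η = β + ε * (∑ i, g β i * q i β - Tc) :=
  stmt5_general N L Tc ε g hgc hgb q hqc hqb
end

section
/- Let g* ∈ B_L be the fixed point of the graph transform. For all η ∈ ℝ, with β = η + b_{g*}(η) the preimage of η, one has ‖g*(β) − h⁰(β)‖ ≤ ε·ω, where ω = (L/γ₀)(|T_c| + (N+1)L). Hence the invariant manifold M_ε = graph(g*) lies within O(ε) of M₀ = graph(h⁰) in the sup norm along preimages. -/
/-!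
Write `β = η + b η`. The fixed-point equation says that `g*(η) - g*(β) = F(g*(β), β)`, and since
every rate `γ i` is at least `γ₀`, this vector has norm at least `γ₀ ‖g*(β) - h⁰(β)‖`. On the other
hand `g*` is `L`-Lipschitz and `|η - β| = |b η| ≤ ε (|T_c| + (N + 1) L)` because `g*` is bounded by
`L` and every `|q i|` by `1`. Dividing by `γ₀` gives the estimate.
-/

open Finset

namespace EuclideanSpace

variable {𝕜 ι : Type*} [RCLike 𝕜] [Fintype ι]

theorem norm_le_norm_of_forall_norm_apply_le {x y : EuclideanSpace 𝕜 ι}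
    (h : ∀ i, ‖x i‖ ≤ ‖y i‖) : ‖x‖ ≤ ‖y‖ := by
  rw [norm_eq, norm_eq]
  gcongr with i
  exact h i

theorem abs_sum_mul_le_card_mul_norm (x : EuclideanSpace ℝ ι) {q : ι → ℝ}
    (hq : ∀ i, |q i| ≤ 1) : |∑ i, x i * q i| ≤ Fintype.card ι * ‖x‖ := by
  calc |∑ i, x i * q i| ≤ ∑ i, |x i * q i| := abs_sum_le_sum_abs _ _
    _ ≤ ∑ _i : ι, ‖x‖ := by
        gcongr with i
        rw [abs_mul]
        exact (mul_le_of_le_one_right (abs_nonneg _) (hq i)).trans (PiLp.norm_apply_le x i)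
    _ = Fintype.card ι * ‖x‖ := by rw [sum_const, card_univ, nsmul_eq_mul]

theorem mul_norm_sub_le_of_relaxation {x y z : EuclideanSpace ℝ ι} {γ : ι → ℝ} {γ₀ : ℝ}
    (hγ₀ : 0 ≤ γ₀) (hγ : ∀ i, γ₀ ≤ γ i) (hy : ∀ i, y i = -γ i * (x i - z i)) :
    γ₀ * ‖x - z‖ ≤ ‖y‖ := by
  rw [← abs_of_nonneg hγ₀, ← Real.norm_eq_abs, ← norm_smul]
  refine norm_le_norm_of_forall_norm_apply_le fun i => ?_
  rw [PiLp.smul_apply, PiLp.sub_apply, hy i, norm_smul, norm_mul, norm_neg,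
    Real.norm_of_nonneg hγ₀, Real.norm_of_nonneg (hγ₀.trans (hγ i))]
  gcongr
  exact hγ i

end EuclideanSpace

theorem stmt11_general (N : ℕ) (ε Tc L γ₀ : ℝ) (hγ0 : 0 < γ₀) (hε0 : 0 < ε)
    (γ : Fin (N + 1) → ℝ) (hγ : ∀ i, γ₀ ≤ γ i)
    (f : Fin (N + 1) → ℝ → ℝ) (q : Fin (N + 1) → ℝ → ℝ) (hqb : ∀ i x, |q i x| ≤ 1)
    (h0 : ℝ → EuclideanSpace ℝ (Fin (N + 1))) (hh0 : ∀ η i, h0 η i = f i η)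
    (gstar : ℝ → EuclideanSpace ℝ (Fin (N + 1)))
    (hgb : ∀ x, ‖gstar x‖ ≤ L) (hglip : LipschitzWith (Real.toNNReal L) gstar)
    (F : EuclideanSpace ℝ (Fin (N + 1)) → ℝ → EuclideanSpace ℝ (Fin (N + 1)))
    (hF : ∀ x η i, F x η i = -γ i * (x i - f i η))
    (b : ℝ → ℝ)
    (hb : ∀ η, b η = ε * (Tc - ∑ i, gstar (η + b η) i * q i (η + b η)))
    (hfix : ∀ η, gstar η = gstar (η + b η) + F (gstar (η + b η)) (η + b η)) :
    ∀ η, ‖gstar (η + b η) - h0 (η + b η)‖ ≤ ε * (L / γ₀ * (|Tc| + (N + 1) * L)) := by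
  intro η
  set β := η + b η
  have hL : 0 ≤ L := (norm_nonneg _).trans (hgb 0)
  have hb_le : |b η| ≤ ε * (|Tc| + (N + 1) * L) := by
    have hsum := EuclideanSpace.abs_sum_mul_le_card_mul_norm (gstar β) (fun i => hqb i β)
    rw [Fintype.card_fin, Nat.cast_add_one] at hsum
    rw [hb η, abs_mul, abs_of_pos hε0]
    gcongr
    calc |Tc - ∑ i, gstar β i * q i β| ≤ |Tc| + |∑ i, gstar β i * q i β| := abs_sub _ _
      _ ≤ |Tc| + (N + 1) * L := by gcongr; exact hsum.trans (by gcongr; exact hgb β)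
  have hlip : ‖gstar η - gstar β‖ ≤ L * |b η| := by
    simpa [← dist_eq_norm, Real.dist_eq, β, Real.coe_toNNReal _ hL] using hglip.dist_le_mul η β
  have hrelax : γ₀ * ‖gstar β - h0 β‖ ≤ ‖gstar η - gstar β‖ := by
    rw [hfix η, add_sub_cancel_left]
    exact EuclideanSpace.mul_norm_sub_le_of_relaxation hγ0.le hγ fun i => by rw [hF, hh0]
  rw [show ε * (L / γ₀ * (|Tc| + (N + 1) * L)) = L * (ε * (|Tc| + (N + 1) * L)) / γ₀ by ring,
    le_div_iff₀' hγ0]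
  calc γ₀ * ‖gstar β - h0 β‖ ≤ L * |b η| := hrelax.trans hlip
    _ ≤ L * (ε * (|Tc| + (N + 1) * L)) := by gcongr

theorem stmt11 (N : ℕ) (ε Tc L γ₀ : ℝ) (hL : 0 < L) (hγ0 : 0 < γ₀) (hε0 : 0 < ε)
    (γ : Fin (N + 1) → ℝ) (hγ : ∀ i, γ₀ ≤ γ i)
    (f : Fin (N + 1) → ℝ → ℝ) (q : Fin (N + 1) → ℝ → ℝ) (hqb : ∀ i x, |q i x| ≤ 1)
    (h0 : ℝ → EuclideanSpace ℝ (Fin (N + 1))) (hh0 : ∀ η i, h0 η i = f i η)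
    (gstar : ℝ → EuclideanSpace ℝ (Fin (N + 1)))
    (hgb : ∀ x, ‖gstar x‖ ≤ L) (hglip : LipschitzWith (Real.toNNReal L) gstar)
    (F : EuclideanSpace ℝ (Fin (N + 1)) → ℝ → EuclideanSpace ℝ (Fin (N + 1)))
    (hF : ∀ x η i, F x η i = -γ i * (x i - f i η))
    (b : ℝ → ℝ)
    (hb : ∀ η, b η = ε * (Tc - ∑ i, gstar (η + b η) i * q i (η + b η)))
    (hfix : ∀ η, gstar η = gstar (η + b η) + F (gstar (η + b η)) (η + b η)) :
    ∀ η, ‖gstar (η + b η) - h0 (η + b η)‖ ≤ ε * (L / γ₀ * (|Tc| + (N + 1) * L)) :=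
  stmt11_general N ε Tc L γ₀ hγ0 hε0 γ hγ f q hqb h0 hh0 gstar hgb hglip F hF b hb hfix
end
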